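/- Fix real numbers φ₀ < φ₁, a < b, constants c > 0 and C₀ > 0, and set Q := [φ₀,φ₁] × [a,b]. Then there exists a constant C₁ > 0, depending only on c and C₀, with the following property. Let σ, v : ℝ × ℝ → ℝ be smooth functions such that: (i) σ(φ,k) ≥ c for all (φ,k) ∈ Q; (ii) for each w ∈ {v, ∂_φ v, ∂_k v} one has sup_Q |w| ≤ C₀ · sup_Q |∂_k w − σ·∂_φ² w|; (iii) the smallness condition C₀·(sup_Q |∂_φ σ/σ| + sup_Q |∂_k σ/σ|) ≤ 1/2 holds. Then, writing g := ∂_k v − σ·∂_φ² v, one has ‖v‖₁ ≤ C₁·(‖g‖₁ + ‖σ‖₁·‖g‖₀). -/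

import Mathlib

open Set

/-- Partial derivative in the first variable `φ` of a function on `ℝ × ℝ`. -/
noncomputable def pdφ (u : ℝ × ℝ → ℝ) : ℝ × ℝ → ℝ :=
  fun p => deriv (fun x => u (x, p.2)) p.1

/-- Partial derivative in the second variable `k` of a function on `ℝ × ℝ`. -/
noncomputable def pdk (u : ℝ × ℝ → ℝ) : ℝ × ℝ → ℝ :=
  fun p => deriv (fun y => u (p.1, y)) p.2

/-- `sup_{p ∈ Q} |u p|`, the uniform norm over `Q`. -/
noncomputable def supQ (Q : Set (ℝ × ℝ)) (u : ℝ × ℝ → ℝ) : ℝ :=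
  ⨆ p : Q, |u ↑p|

/-- The graded seminorm `‖u‖_n = ∑_{j=0}^n ∑_{α₁+α₂=j} sup_Q |∂_φ^{α₁} ∂_k^{α₂} u|`. -/
noncomputable def gnorm (Q : Set (ℝ × ℝ)) (n : ℕ) (u : ℝ × ℝ → ℝ) : ℝ :=
  ∑ j ∈ Finset.range (n + 1), ∑ i ∈ Finset.range (j + 1),
    supQ Q (pdφ^[i] (pdk^[j - i] u))

/-! ### Auxiliary lemmas -/

lemma pdφ_apply {u : ℝ × ℝ → ℝ} {p : ℝ × ℝ} (hu : DifferentiableAt ℝ u p) :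
    pdφ u p = fderiv ℝ u p (1, 0) := by
  have h1 : HasDerivAt (fun x : ℝ => ((x, p.2) : ℝ × ℝ)) (1, 0) p.1 :=
    (hasDerivAt_id p.1).prodMk (hasDerivAt_const p.1 p.2)
  have h2 : HasFDerivAt u (fderiv ℝ u p) (p.1, p.2) := by
    simpa using hu.hasFDerivAt
  exact (h2.comp_hasDerivAt p.1 h1).deriv

lemma pdk_apply {u : ℝ × ℝ → ℝ} {p : ℝ × ℝ} (hu : DifferentiableAt ℝ u p) :
    pdk u p = fderiv ℝ u p (0, 1) := by
  have h1 : HasDerivAt (fun y : ℝ => ((p.1, y) : ℝ × ℝ)) (0, 1) p.2 :=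
    (hasDerivAt_const p.2 p.1).prodMk (hasDerivAt_id p.2)
  have h2 : HasFDerivAt u (fderiv ℝ u p) (p.1, p.2) := by
    simpa using hu.hasFDerivAt
  exact (h2.comp_hasDerivAt p.2 h1).deriv

lemma pdφ_eq {u : ℝ × ℝ → ℝ} (hu : ContDiff ℝ (⊤ : ℕ∞) u) :
    pdφ u = fun p => fderiv ℝ u p (1, 0) :=
  funext fun p => pdφ_apply ((hu.differentiable (by simp)) p)

lemma pdk_eq {u : ℝ × ℝ → ℝ} (hu : ContDiff ℝ (⊤ : ℕ∞) u) :
    pdk u = fun p => fderiv ℝ u p (0, 1) :=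
  funext fun p => pdk_apply ((hu.differentiable (by simp)) p)

lemma contDiff_pdφ {u : ℝ × ℝ → ℝ} (hu : ContDiff ℝ (⊤ : ℕ∞) u) : ContDiff ℝ (⊤ : ℕ∞) (pdφ u) := by
  rw [pdφ_eq hu]
  exact (hu.fderiv_right (by simp)).clm_apply contDiff_const

lemma contDiff_pdk {u : ℝ × ℝ → ℝ} (hu : ContDiff ℝ (⊤ : ℕ∞) u) : ContDiff ℝ (⊤ : ℕ∞) (pdk u) := by
  rw [pdk_eq hu]
  exact (hu.fderiv_right (by simp)).clm_apply contDiff_const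

lemma fderiv_fderiv_apply {u : ℝ × ℝ → ℝ} (hu : ContDiff ℝ (⊤ : ℕ∞) u) (p z w : ℝ × ℝ) :
    fderiv ℝ (fun q => fderiv ℝ u q w) p z = fderiv ℝ (fderiv ℝ u) p z w := by
  have hfd : DifferentiableAt ℝ (fderiv ℝ u) p :=
    ((hu.fderiv_right (m := (⊤ : ℕ∞)) (by simp)).differentiable (by simp)) p
  rw [fderiv_clm_apply hfd (differentiableAt_const w)]
  simp

lemma pd_comm {u : ℝ × ℝ → ℝ} (hu : ContDiff ℝ (⊤ : ℕ∞) u) :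
    pdφ (pdk u) = pdk (pdφ u) := by
  funext p
  have hdu : Differentiable ℝ u := hu.differentiable (by simp)
  have hfd : DifferentiableAt ℝ (fderiv ℝ u) p :=
    ((hu.fderiv_right (m := (⊤ : ℕ∞)) (by simp)).differentiable (by simp)) p
  have hsymm := second_derivative_symmetric (f := u)
    (fun y => (hdu y).hasFDerivAt) hfd.hasFDerivAt
  rw [pdφ_apply (((contDiff_pdk hu).differentiable (by simp)) p),
      pdk_apply (((contDiff_pdφ hu).differentiable (by simp)) p),
      pdk_eq hu, pdφ_eq hu, fderiv_fderiv_apply hu, fderiv_fderiv_apply hu]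
  exact hsymm _ _

lemma sliceφ_diff {u : ℝ × ℝ → ℝ} (hu : ContDiff ℝ (⊤ : ℕ∞) u) (t : ℝ) :
    Differentiable ℝ (fun x : ℝ => u (x, t)) :=
  (hu.differentiable (by simp)).comp (differentiable_id.prodMk (differentiable_const t))

lemma slicek_diff {u : ℝ × ℝ → ℝ} (hu : ContDiff ℝ (⊤ : ℕ∞) u) (s : ℝ) :
    Differentiable ℝ (fun y : ℝ => u (s, y)) :=
  (hu.differentiable (by simp)).comp ((differentiable_const s).prodMk differentiable_id)

lemma pdφ_sub {u w : ℝ × ℝ → ℝ} (hu : ContDiff ℝ (⊤ : ℕ∞) u) (hw : ContDiff ℝ (⊤ : ℕ∞) w) (p : ℝ × ℝ) :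
    pdφ (fun q => u q - w q) p = pdφ u p - pdφ w p :=
  deriv_sub ((sliceφ_diff hu p.2) p.1) ((sliceφ_diff hw p.2) p.1)

lemma pdk_sub {u w : ℝ × ℝ → ℝ} (hu : ContDiff ℝ (⊤ : ℕ∞) u) (hw : ContDiff ℝ (⊤ : ℕ∞) w) (p : ℝ × ℝ) :
    pdk (fun q => u q - w q) p = pdk u p - pdk w p :=
  deriv_sub ((slicek_diff hu p.1) p.2) ((slicek_diff hw p.1) p.2)

lemma pdφ_mul {u w : ℝ × ℝ → ℝ} (hu : ContDiff ℝ (⊤ : ℕ∞) u) (hw : ContDiff ℝ (⊤ : ℕ∞) w) (p : ℝ × ℝ) :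
    pdφ (fun q => u q * w q) p = pdφ u p * w p + u p * pdφ w p := by
  have := deriv_fun_mul ((sliceφ_diff hu p.2) p.1) ((sliceφ_diff hw p.2) p.1)
  simpa [pdφ] using this

lemma pdk_mul {u w : ℝ × ℝ → ℝ} (hu : ContDiff ℝ (⊤ : ℕ∞) u) (hw : ContDiff ℝ (⊤ : ℕ∞) w) (p : ℝ × ℝ) :
    pdk (fun q => u q * w q) p = pdk u p * w p + u p * pdk w p := by
  have := deriv_fun_mul ((slicek_diff hu p.1) p.2) ((slicek_diff hw p.1) p.2)
  simpa [pdk] using this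

lemma supQ_nonneg (Q : Set (ℝ × ℝ)) (u : ℝ × ℝ → ℝ) : 0 ≤ supQ Q u :=
  Real.iSup_nonneg fun _ => abs_nonneg _

lemma le_supQ {Q : Set (ℝ × ℝ)} (hQ : IsCompact Q) {u : ℝ × ℝ → ℝ}
    (hu : ContinuousOn u Q) {p : ℝ × ℝ} (hp : p ∈ Q) : |u p| ≤ supQ Q u := by
  have hbd : BddAbove (Set.range fun q : Q => |u ↑q|) := by
    have : (Set.range fun q : Q => |u ↑q|) = (fun q => |u q|) '' Q := by
      ext x; simp [Set.image_eq_range]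
    rw [this]
    exact (hQ.image_of_continuousOn hu.abs).bddAbove
  exact le_ciSup hbd ⟨p, hp⟩

lemma supQ_le {Q : Set (ℝ × ℝ)} (hQ : Q.Nonempty) {u : ℝ × ℝ → ℝ} {M : ℝ}
    (h : ∀ p ∈ Q, |u p| ≤ M) : supQ Q u ≤ M := by
  have : Nonempty Q := hQ.to_subtype
  exact ciSup_le fun p => h p p.2

/-- Lemma (lemma:v1): the first-order tame estimate `‖v‖₁ ≤ C₁(‖g‖₁ + ‖σ‖₁ ‖g‖₀)`
for the inverse of the linearised RG operator. -/
theorem first_order_tame_estimate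
    (φ0 φ1 a b c C0 : ℝ) (hφ : φ0 < φ1) (hab : a < b) (hc : 0 < c) (hC0 : 0 < C0) :
    ∃ C1 > (0 : ℝ), ∀ σ v : ℝ × ℝ → ℝ, ContDiff ℝ (⊤ : ℕ∞) σ → ContDiff ℝ (⊤ : ℕ∞) v →
      -- (i) σ ≥ c on Q
      (∀ p ∈ Icc φ0 φ1 ×ˢ Icc a b, c ≤ σ p) →
      -- (ii) uniform continuity bound for w ∈ {v, ∂_φ v, ∂_k v}
      (∀ w ∈ ({v, pdφ v, pdk v} : Set (ℝ × ℝ → ℝ)),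
        supQ (Icc φ0 φ1 ×ˢ Icc a b) w ≤
          C0 * supQ (Icc φ0 φ1 ×ˢ Icc a b)
            (fun p => pdk w p - σ p * pdφ (pdφ w) p)) →
      -- (iii) smallness of the logarithmic derivatives of σ
      C0 * (supQ (Icc φ0 φ1 ×ˢ Icc a b) (fun p => pdφ σ p / σ p) +
            supQ (Icc φ0 φ1 ×ˢ Icc a b) (fun p => pdk σ p / σ p)) ≤ 1 / 2 →
      gnorm (Icc φ0 φ1 ×ˢ Icc a b) 1 v ≤
        C1 * (gnorm (Icc φ0 φ1 ×ˢ Icc a b) 1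
                (fun p => pdk v p - σ p * pdφ (pdφ v) p) +
              gnorm (Icc φ0 φ1 ×ˢ Icc a b) 1 σ *
                gnorm (Icc φ0 φ1 ×ˢ Icc a b) 0
                  (fun p => pdk v p - σ p * pdφ (pdφ v) p)) := by
  refine ⟨2 * C0 + 1, by linarith, ?_⟩
  intro σ v hσ hv hi hii hiii
  set Q : Set (ℝ × ℝ) := Icc φ0 φ1 ×ˢ Icc a b with hQdef
  have hQc : IsCompact Q := isCompact_Icc.prod isCompact_Icc
  have hQne : Q.Nonempty := ⟨(φ0, a), by simp [hQdef, hφ.le, hab.le]⟩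
  set g : ℝ × ℝ → ℝ := fun p => pdk v p - σ p * pdφ (pdφ v) p with hgdef
  have hv2 : ContDiff ℝ (⊤ : ℕ∞) (pdφ (pdφ v)) := contDiff_pdφ (contDiff_pdφ hv)
  have hg : ContDiff ℝ (⊤ : ℕ∞) g := (contDiff_pdk hv).sub (hσ.mul hv2)
  -- commutation facts
  have c1 : pdφ (pdk v) = pdk (pdφ v) := pd_comm hv
  have c2 : pdφ (pdφ (pdk v)) = pdk (pdφ (pdφ v)) := by
    rw [c1]; exact pd_comm (contDiff_pdφ hv)
  -- identity in the φ direction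
  have Lφ : ∀ p, pdk (pdφ v) p - σ p * pdφ (pdφ (pdφ v)) p
      = pdφ g p + pdφ σ p * pdφ (pdφ v) p := by
    intro p
    have h1 : pdφ g p = pdφ (pdk v) p -
        (pdφ σ p * pdφ (pdφ v) p + σ p * pdφ (pdφ (pdφ v)) p) := by
      rw [hgdef]
      rw [pdφ_sub (contDiff_pdk hv) (hσ.mul hv2) p, pdφ_mul hσ hv2 p]
    have h2 : pdφ (pdk v) p = pdk (pdφ v) p := congrFun c1 p
    rw [h1, h2]; ring
  -- identity in the k direction
  have Lk : ∀ p, pdk (pdk v) p - σ p * pdφ (pdφ (pdk v)) p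
      = pdk g p + pdk σ p * pdφ (pdφ v) p := by
    intro p
    have h1 : pdk g p = pdk (pdk v) p -
        (pdk σ p * pdφ (pdφ v) p + σ p * pdk (pdφ (pdφ v)) p) := by
      rw [hgdef]
      rw [pdk_sub (contDiff_pdk hv) (hσ.mul hv2) p, pdk_mul hσ hv2 p]
    have h2 : pdφ (pdφ (pdk v)) p = pdk (pdφ (pdφ v)) p := congrFun c2 p
    rw [h1, h2]; ring
  -- on Q, σ ≠ 0 and the ratio rewriting
  have hσne : ∀ p ∈ Q, σ p ≠ 0 := fun p hp => ne_of_gt (lt_of_lt_of_le hc (hi p hp))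
  have hratio : ∀ p ∈ Q, ∀ τ : ℝ × ℝ → ℝ,
      pdk v p - g p = σ p * pdφ (pdφ v) p := by
    intro p hp τ; rw [hgdef]; ring
  -- continuity facts
  have cv : ContinuousOn v Q := (hv.continuous).continuousOn
  have cpv : ContinuousOn (pdφ v) Q := (contDiff_pdφ hv).continuous.continuousOn
  have ckv : ContinuousOn (pdk v) Q := (contDiff_pdk hv).continuous.continuousOn
  have cg : ContinuousOn g Q := hg.continuous.continuousOn
  have cpg : ContinuousOn (pdφ g) Q := (contDiff_pdφ hg).continuous.continuousOn
  have ckg : ContinuousOn (pdk g) Q := (contDiff_pdk hg).continuous.continuousOn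
  have crφ : ContinuousOn (fun p => pdφ σ p / σ p) Q :=
    ((contDiff_pdφ hσ).continuous.continuousOn).div (hσ.continuous.continuousOn) hσne
  have crk : ContinuousOn (fun p => pdk σ p / σ p) Q :=
    ((contDiff_pdk hσ).continuous.continuousOn).div (hσ.continuous.continuousOn) hσne
  -- abbreviations
  set Sv := supQ Q v
  set X := supQ Q (pdφ v) with hXdef
  set Y := supQ Q (pdk v) with hYdef
  set G0 := supQ Q g with hG0def
  set G1 := supQ Q (pdφ g) with hG1def
  set G2 := supQ Q (pdk g) with hG2def
  set A := supQ Q (fun p => pdφ σ p / σ p) with hAdef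
  set B := supQ Q (fun p => pdk σ p / σ p) with hBdef
  have hA0 : 0 ≤ A := supQ_nonneg _ _
  have hB0 : 0 ≤ B := supQ_nonneg _ _
  have hG00 : 0 ≤ G0 := supQ_nonneg _ _
  have hG10 : 0 ≤ G1 := supQ_nonneg _ _
  have hG20 : 0 ≤ G2 := supQ_nonneg _ _
  have hX0 : 0 ≤ X := supQ_nonneg _ _
  have hY0 : 0 ≤ Y := supQ_nonneg _ _
  -- bound for v
  have hSv : Sv ≤ C0 * G0 := hii v (by simp)
  -- bound in the φ direction
  have hXb : supQ Q (fun p => pdk (pdφ v) p - σ p * pdφ (pdφ (pdφ v)) p)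
      ≤ G1 + A * (Y + G0) := by
    apply supQ_le hQne
    intro p hp
    have hrw : pdφ σ p * pdφ (pdφ v) p = (pdφ σ p / σ p) * (pdk v p - g p) := by
      have h2 : pdk v p - g p = σ p * pdφ (pdφ v) p := by rw [hgdef]; ring
      rw [h2]; field_simp [hσne p hp]
    simp only [Lφ p, hrw]
    calc |pdφ g p + pdφ σ p / σ p * (pdk v p - g p)|
        ≤ |pdφ g p| + |pdφ σ p / σ p| * |pdk v p - g p| := by
          rw [← abs_mul]; exact abs_add_le _ _
      _ ≤ G1 + A * (Y + G0) := by
          refine add_le_add (le_supQ hQc cpg hp) (mul_le_mul (le_supQ hQc crφ hp) ?_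
            (abs_nonneg _) hA0)
          exact (abs_sub _ _).trans
            (add_le_add (le_supQ hQc ckv hp) (le_supQ hQc cg hp))
  -- bound in the k direction
  have hYb : supQ Q (fun p => pdk (pdk v) p - σ p * pdφ (pdφ (pdk v)) p)
      ≤ G2 + B * (Y + G0) := by
    apply supQ_le hQne
    intro p hp
    have hrw : pdk σ p * pdφ (pdφ v) p = (pdk σ p / σ p) * (pdk v p - g p) := by
      have h2 : pdk v p - g p = σ p * pdφ (pdφ v) p := by rw [hgdef]; ring
      rw [h2]; field_simp [hσne p hp]
    simp only [Lk p, hrw]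
    calc |pdk g p + pdk σ p / σ p * (pdk v p - g p)|
        ≤ |pdk g p| + |pdk σ p / σ p| * |pdk v p - g p| := by
          rw [← abs_mul]; exact abs_add_le _ _
      _ ≤ G2 + B * (Y + G0) := by
          refine add_le_add (le_supQ hQc ckg hp) (mul_le_mul (le_supQ hQc crk hp) ?_
            (abs_nonneg _) hB0)
          exact (abs_sub _ _).trans
            (add_le_add (le_supQ hQc ckv hp) (le_supQ hQc cg hp))
  have hX : X ≤ C0 * (G1 + A * (Y + G0)) :=
    le_trans (hii (pdφ v) (by simp)) (mul_le_mul_of_nonneg_left hXb hC0.le)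
  have hY : Y ≤ C0 * (G2 + B * (Y + G0)) :=
    le_trans (hii (pdk v) (by simp)) (mul_le_mul_of_nonneg_left hYb hC0.le)
  have hσn : 0 ≤ gnorm Q 1 σ :=
    Finset.sum_nonneg fun j _ => Finset.sum_nonneg fun i _ => supQ_nonneg _ _
  have egv : gnorm Q 1 v = Sv + (Y + X) := by
    simp [gnorm, Finset.sum_range_succ]; rfl
  have egg : gnorm Q 1 g = G0 + (G2 + G1) := by
    simp [gnorm, Finset.sum_range_succ]; rfl
  have egg0 : gnorm Q 0 g = G0 := by
    simp [gnorm]; rfl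
  rw [egv, egg, egg0]
  nlinarith [hX, hY, hSv, hiii, hA0, hB0, hG00, hG10, hG20, hX0, hY0, hσn,
    mul_nonneg hσn hG00, mul_le_mul_of_nonneg_right hiii (add_nonneg hY0 hG00),
    mul_nonneg (mul_nonneg hC0.le hA0) (add_nonneg hY0 hG00),
    mul_nonneg (mul_nonneg hC0.le hB0) (add_nonneg hY0 hG00)]
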